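/- arXiv:2511.08786 — 2 statements merged into one kernel-verified Lean document; each statement's English description precedes it below -/
import Mathlib

section
/- There exists a unique probability measure μ on the measurable space (Π, F_Π), where F_Π is the σ-algebra generated by the cylinders cyl(g) for g ∈ PPΠ, such that for every g ∈ PPΠ with 2^n − 1 ≤ |g| < 2^{n+1} − 1 and m = |g| − (2^n − 1), μ(cyl(g)) = (∏_{k=0}^{n−1} 1/(2^k)!) · (2^n − m)!/(2^n)!. -/
open Filter MeasureTheory

/-- Binary strings. -/
abbrev Str := List Bool

/-- The standard length-lexicographic enumeration `s_0 = λ, s_1 = 0, s_2 = 1, s_3 = 00, …`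
of binary strings: `stdEnum n` is the binary representation of `n+1` with the leading 1 removed. -/
def stdEnum (n : ℕ) : Str := ((n + 1).bits.dropLast).reverse

/-- The set Π of length-preserving permutations of `{0,1}*`. -/
structure LPPerm where
  toFun : Str → Str
  bij : Function.Bijective toFun
  lenPres : ∀ x, (toFun x).length = x.length

/-- `g` is a prefix partial permutation: a finite list of pairwise distinct binary strings
with `|g(s_i)| = |s_i|` for all `i < |g|`. -/
def IsPPP (g : List Str) : Prop :=
  g.Nodup ∧ ∀ i (h : i < g.length), (g.get ⟨i, h⟩).length = (stdEnum i).length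

/-- The finite set of binary strings of length `n`. -/
def strsOfLen (n : ℕ) : Finset Str :=
  (Finset.univ : Finset (Fin n → Bool)).image List.ofFn

/-- `free(g)`: strings of length `|s_{|g|}|` that do not occur as entries of `g`. -/
def freeSet (g : List Str) : Finset Str :=
  (strsOfLen (stdEnum g.length).length).filter (fun x => x ∉ g)

/-- A permutation martingale: nonnegative and satisfying the averaging condition
`d(g) = (1/|free(g)|) · Σ_{x ∈ free(g)} d((g,x))` on prefix partial permutations. -/
def IsPermMartingale (d : List Str → ℝ) : Prop :=
  (∀ g, 0 ≤ d g) ∧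
    ∀ g, IsPPP g → d g = (1 / ((freeSet g).card : ℝ)) * ∑ x ∈ freeSet g, d (g ++ [x])

/-- The cylinder measure `μ(g) = (∏_{k<n} 1/(2^k)!) · (2^n − m)!/(2^n)!` where
`2^n − 1 ≤ |g| < 2^{n+1} − 1` (so `n = log2(|g|+1)`) and `m = |g| − (2^n − 1)`. -/
noncomputable def muPPP (g : List Str) : ℝ :=
  (∏ k ∈ Finset.range (Nat.log2 (g.length + 1)), (1 : ℝ) / (Nat.factorial (2 ^ k))) *
      (Nat.factorial
        (2 ^ Nat.log2 (g.length + 1) - (g.length - (2 ^ Nat.log2 (g.length + 1) - 1)))) /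
      (Nat.factorial (2 ^ Nat.log2 (g.length + 1)))

/-- The cylinder of all permutations extending the prefix partial permutation `g`. -/
def cyl (g : List Str) : Set LPPerm :=
  {π | ∀ i (h : i < g.length), π.toFun (stdEnum i) = g.get ⟨i, h⟩}

/-- The σ-algebra `F_Π` generated by the cylinders. -/
instance : MeasurableSpace LPPerm :=
  MeasurableSpace.generateFrom {S | ∃ g, IsPPP g ∧ S = cyl g}

/-- `π↾N = [π(s_0), …, π(s_{N−1})]`. -/
def LPPerm.restrict (π : LPPerm) (N : ℕ) : List Str :=
  (List.range N).map (fun i => π.toFun (stdEnum i))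

/-- `d` succeeds on `π`: `limsup_{N→∞} d(π↾N) = ∞`. -/
def succeedsOn (d : List Str → ℝ) (π : LPPerm) : Prop :=
  ∀ C : ℝ, ∃ᶠ N in atTop, C < d (π.restrict N)

namespace PPPAux

/-- value of a little-endian bit list -/
def ofBits (l : List Bool) : ℕ := l.foldr (fun b n => n.bit b) 0

@[simp] lemma ofBits_nil : ofBits [] = 0 := rfl
@[simp] lemma ofBits_cons (b : Bool) (l : List Bool) :
    ofBits (b :: l) = (ofBits l).bit b := rfl

lemma ofBits_bits (n : ℕ) : ofBits n.bits = n := by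
  induction n using Nat.binaryRec with
  | zero => simp [Nat.zero_bits]
  | bit b n ih =>
    rcases Nat.eq_zero_or_pos n with h0 | h0
    · subst h0
      cases b <;> simp [Nat.bit_val, ofBits]
    · rw [Nat.bits_append_bit n b (fun h => absurd h h0.ne'), ofBits_cons, ih]

lemma getLast?_bits (n : ℕ) (hn : n ≠ 0) : n.bits.getLast? = some true := by
  induction n using Nat.binaryRec with
  | zero => exact absurd rfl hn
  | bit b n ih =>
    rcases Nat.eq_zero_or_pos n with h0 | h0
    · subst h0
      cases b
      · exact absurd rfl hn
      · simp
    · rw [Nat.bits_append_bit n b (fun h => absurd h h0.ne')]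
      rw [List.getLast?_cons, ih h0.ne']
      simp [Option.or]

lemma ofBits_pos (l : List Bool) (hl : l.getLast? = some true) : 0 < ofBits l := by
  induction l with
  | nil => simp at hl
  | cons b l ih =>
    rcases List.eq_nil_or_concat l with h0 | _
    · subst h0
      simp at hl
      subst hl
      simp [Nat.bit_val]
    · have hne : l ≠ [] := by rintro rfl; simp_all
      have hl' : l.getLast? = some true := by
        rwa [List.getLast?_eq_getLast (List.cons_ne_nil b l), List.getLast_cons hne,
          ← List.getLast?_eq_getLast hne] at hl
      have := ih hl'
      simp only [ofBits_cons, Nat.bit_val]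
      cases b <;> simp <;> omega

lemma bits_ofBits (l : List Bool) (hl : l.getLast? = some true) : (ofBits l).bits = l := by
  induction l with
  | nil => simp at hl
  | cons b l ih =>
    rcases List.eq_nil_or_concat l with h0 | _
    · subst h0
      simp at hl
      subst hl
      simp [ofBits, Nat.bit_val]
    · have hne : l ≠ [] := by rintro rfl; simp_all
      have hl' : l.getLast? = some true := by
        rwa [List.getLast?_eq_getLast (List.cons_ne_nil b l), List.getLast_cons hne,
          ← List.getLast?_eq_getLast hne] at hl
      have hpos := ofBits_pos l hl'
      rw [ofBits_cons, Nat.bits_append_bit _ b (fun h => absurd h hpos.ne'), ih hl']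

lemma ofBits_concat_true (l : List Bool) : ofBits (l ++ [true]) = ofBits l + 2 ^ l.length := by
  induction l with
  | nil => simp [ofBits, Nat.bit]
  | cons b l ih =>
    simp only [List.cons_append, ofBits_cons, ih, Nat.bit_val, List.length_cons]
    cases b <;> simp <;> ring

lemma ofBits_lt (l : List Bool) : ofBits l < 2 ^ l.length := by
  induction l with
  | nil => simp [ofBits]
  | cons b l ih =>
    simp only [ofBits_cons, Nat.bit_val, List.length_cons, pow_succ]
    cases b <;> simp <;> omega

/-- index of a string in the standard enumeration -/
def idx (x : Str) : ℕ := ofBits (x.reverse ++ [true]) - 1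

lemma idx_add_one (x : Str) : idx x + 1 = ofBits x.reverse + 2 ^ x.length := by
  have h := ofBits_concat_true x.reverse
  have : 0 < 2 ^ x.length := Nat.pow_pos (by norm_num)
  simp only [idx, h, List.length_reverse]
  omega

lemma stdEnum_idx (x : Str) : stdEnum (idx x) = x := by
  have h1 : idx x + 1 = ofBits (x.reverse ++ [true]) := by
    have := idx_add_one x
    have := ofBits_concat_true x.reverse
    simp only [List.length_reverse] at *
    omega
  rw [stdEnum, h1, bits_ofBits _ List.getLast?_concat, List.dropLast_concat,
    List.reverse_reverse]

lemma idx_stdEnum (n : ℕ) : idx (stdEnum n) = n := by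
  have hne : (n+1).bits ≠ [] := by
    intro h
    have := ofBits_bits (n+1)
    rw [h] at this
    simp [ofBits] at this
  have hlast : (n+1).bits.getLast hne = true := by
    have := getLast?_bits (n+1) (Nat.succ_ne_zero n)
    rwa [List.getLast?_eq_getLast hne, Option.some_inj] at this
  have hrec : (stdEnum n).reverse ++ [true] = (n+1).bits := by
    simp only [stdEnum, List.reverse_reverse]
    rw [← hlast]
    exact List.dropLast_append_getLast hne
  simp only [idx, hrec, ofBits_bits]
  omega

lemma stdEnum_injective : Function.Injective stdEnum :=
  Function.LeftInverse.injective idx_stdEnum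

lemma idx_lt (x : Str) : idx x < 2 ^ (x.length + 1) - 1 := by
  have h1 := idx_add_one x
  have h2 : ofBits x.reverse < 2 ^ x.length := by
    have := ofBits_lt x.reverse
    simpa using this
  have : 0 < 2 ^ x.length := Nat.pow_pos (by norm_num)
  simp only [pow_succ]
  omega

lemma le_idx (x : Str) : 2 ^ x.length - 1 ≤ idx x := by
  have h1 := idx_add_one x
  omega

lemma length_stdEnum (n : ℕ) : (stdEnum n).length = Nat.log 2 (n + 1) := by
  set x := stdEnum n with hx
  have h1 : idx x = n := idx_stdEnum n
  have h2 := idx_add_one x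
  have h3 : ofBits x.reverse < 2 ^ x.length := by simpa using ofBits_lt x.reverse
  refine (Nat.log_eq_of_pow_le_of_lt_pow ?_ ?_).symm
  · omega
  · rw [pow_succ]; omega

lemma log2_eq (n : ℕ) : Nat.log2 (n+1) = Nat.log 2 (n+1) := Nat.log2_eq_log_two


open Equiv

lemma mem_strsOfLen {n : ℕ} {x : Str} : x ∈ strsOfLen n ↔ x.length = n := by
  constructor
  · rintro hx
    simp only [strsOfLen, Finset.mem_image] at hx
    obtain ⟨f, _, rfl⟩ := hx
    simp
  · intro h
    subst h
    simp only [strsOfLen, Finset.mem_image]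
    exact ⟨x.get, Finset.mem_univ _, List.ofFn_get x⟩

def Lev (k : ℕ) : Type := {x : Str // x.length = k}

instance (k : ℕ) : DecidableEq (Lev k) := fun a b =>
  decidable_of_iff (a.val = b.val) Subtype.ext_iff.symm

instance (k : ℕ) : Fintype (Lev k) := Fintype.subtype (strsOfLen k) (fun _ => mem_strsOfLen)

def levEquivFn (k : ℕ) : (Fin k → Bool) ≃ Lev k where
  toFun v := ⟨List.ofFn v, by simp⟩
  invFun x := fun i => x.val.get ⟨i, by rw [x.2]; exact i.2⟩
  left_inv v := by funext i; simp
  right_inv x := by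
    obtain ⟨x, hx⟩ := x
    subst hx
    exact Subtype.ext (List.ofFn_get x)

lemma card_lev (k : ℕ) : Fintype.card (Lev k) = 2 ^ k := by
  rw [← Fintype.card_congr (levEquivFn k)]
  simp

/-- the level-`k` permutation induced by a length-preserving permutation -/
noncomputable def levPerm (π : LPPerm) (k : ℕ) : Perm (Lev k) :=
  Equiv.ofBijective (fun x => ⟨π.toFun x.val, by rw [π.lenPres]; exact x.2⟩)
    (by
      have : Function.Injective (fun x : Lev k => (⟨π.toFun x.val, by rw [π.lenPres]; exact x.2⟩ : Lev k)) := by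
        intro a b hab
        exact Subtype.ext (π.bij.1 (congrArg Subtype.val hab))
      exact Finite.injective_iff_bijective.mp this)

@[simp] lemma levPerm_apply (π : LPPerm) (k : ℕ) (x : Lev k) :
    (levPerm π k x).val = π.toFun x.val := rfl

abbrev G := ∀ k : ℕ, Perm (Lev k)

lemma LPPerm.ext' {π π' : LPPerm} (h : π.toFun = π'.toFun) : π = π' := by
  cases π; cases π'; simpa using h

lemma key_cast (f : G) : ∀ (k : ℕ) (x : Str) (hx : x.length = k),
    (f x.length ⟨x, rfl⟩).val = (f k ⟨x, hx⟩).val := by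
  intro k x hx; subst hx; rfl

/-- Π is equivalent to the product of the finite permutation groups of each level. -/
noncomputable def E : LPPerm ≃ G where
  toFun π k := levPerm π k
  invFun f :=
    { toFun := fun x => (f x.length ⟨x, rfl⟩).val
      bij := by
        constructor
        · intro x y hxy
          dsimp only at hxy
          have hlen : x.length = y.length := by
            have hx := ((f x.length ⟨x, rfl⟩)).2
            have hy := ((f y.length ⟨y, rfl⟩)).2
            rw [← hx, ← hy, hxy]
          have h1 : (f x.length ⟨x, rfl⟩).val = (f x.length ⟨y, hlen.symm⟩).val := by
            rw [hxy, key_cast f x.length y hlen.symm]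
          have h2 := (f x.length).injective (Subtype.ext h1)
          have := congrArg Subtype.val h2
          simpa using this
        · intro y
          refine ⟨((f y.length).symm ⟨y, rfl⟩).val, ?_⟩
          have h2 := ((f y.length).symm ⟨y, rfl⟩).2
          show (f (((f y.length).symm ⟨y, rfl⟩).val).length
              ⟨((f y.length).symm ⟨y, rfl⟩).val, rfl⟩).val = y
          rw [key_cast f y.length _ h2]
          rw [show (⟨((f y.length).symm ⟨y, rfl⟩).val, h2⟩ : Lev y.length) =
              (f y.length).symm ⟨y, rfl⟩ from Subtype.ext rfl]
          exact congrArg Subtype.val (Equiv.apply_symm_apply (f y.length) ⟨y, rfl⟩)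
      lenPres := fun x => (f x.length ⟨x, rfl⟩).2 }
  left_inv π := LPPerm.ext' rfl
  right_inv f := by
    funext k
    ext x
    refine Subtype.ext ?_
    show (f x.val.length ⟨x.val, rfl⟩).val = (f k x).val
    rw [key_cast f k x.val x.2]
    rfl

instance (k : ℕ) : MeasurableSpace (Perm (Lev k)) := ⊤
instance (k : ℕ) : TopologicalSpace (Perm (Lev k)) := ⊥
instance (k : ℕ) : DiscreteTopology (Perm (Lev k)) := ⟨rfl⟩
instance (k : ℕ) : BorelSpace (Perm (Lev k)) := ⟨borel_eq_top_of_discrete.symm⟩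
instance (k : ℕ) : IsTopologicalGroup (Perm (Lev k)) where
  continuous_mul := continuous_of_discreteTopology
  continuous_inv := continuous_of_discreteTopology


lemma restrict_length (π : LPPerm) (N : ℕ) : (π.restrict N).length = N := by
  simp [LPPerm.restrict]

lemma restrict_get (π : LPPerm) (N i : ℕ) (h : i < N) :
    (π.restrict N).get ⟨i, by rw [restrict_length]; exact h⟩ = π.toFun (stdEnum i) := by
  simp [LPPerm.restrict]

lemma isPPP_restrict (π : LPPerm) (N : ℕ) : IsPPP (π.restrict N) := by
  constructor
  · exact List.Nodup.map (π.bij.1.comp stdEnum_injective) List.nodup_range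
  · intro i hi
    have hi' : i < N := by rwa [restrict_length] at hi
    rw [show (π.restrict N).get ⟨i, hi⟩ = π.toFun (stdEnum i) from restrict_get π N i hi']
    exact π.lenPres _

lemma cyl_eq (g : List Str) (hg : IsPPP g) : cyl g = {π | π.restrict g.length = g} := by
  ext π
  constructor
  · intro h
    refine List.ext_get (restrict_length _ _) (fun i h1 h2 => ?_)
    have hi : i < g.length := h2
    rw [show (π.restrict g.length).get ⟨i, h1⟩ = π.toFun (stdEnum i) from
      restrict_get π g.length i hi]
    exact h i hi
  · intro h i hi
    have h1 : i < (π.restrict g.length).length := by rw [restrict_length]; exact hi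
    calc π.toFun (stdEnum i) = (π.restrict g.length).get ⟨i, h1⟩ :=
          (restrict_get π g.length i hi).symm
      _ = g.get ⟨i, hi⟩ := List.get_of_eq h ⟨i, h1⟩

lemma measurableSet_restrict_eq (N : ℕ) (g : List Str) :
    MeasurableSet {π : LPPerm | π.restrict N = g} := by
  by_cases hN : g.length = N
  · by_cases hg : IsPPP g
    · subst hN
      rw [← cyl_eq g hg]
      exact MeasurableSpace.measurableSet_generateFrom ⟨g, hg, rfl⟩
    · convert MeasurableSet.empty
      ext π
      simp only [Set.mem_setOf_eq, Set.mem_empty_iff_false, iff_false]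
      intro h
      exact hg (h ▸ isPPP_restrict π N)
  · convert MeasurableSet.empty
    ext π
    simp only [Set.mem_setOf_eq, Set.mem_empty_iff_false, iff_false]
    intro h
    exact hN (h ▸ restrict_length π N)

lemma measurableSet_restrict_mem (N : ℕ) (A : Set (List Str)) :
    MeasurableSet {π : LPPerm | π.restrict N ∈ A} := by
  have : {π : LPPerm | π.restrict N ∈ A} = ⋃ g ∈ A, {π : LPPerm | π.restrict N = g} := by
    ext π; simp
  rw [this]
  exact MeasurableSet.biUnion (Set.to_countable A) (fun g _ => measurableSet_restrict_eq N g)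

lemma measurable_E : Measurable (E : LPPerm → G) := by
  apply measurable_pi_lambda
  intro k
  intro s _
  have hs : (fun π : LPPerm => E π k) ⁻¹' s = ⋃ σ ∈ s, {π : LPPerm | E π k = σ} := by
    ext π; simp [eq_comm]
  rw [hs]
  refine MeasurableSet.biUnion (Set.to_countable s) (fun σ _ => ?_)
  have key : {π : LPPerm | E π k = σ} =
      {π : LPPerm | π.restrict (2 ^ (k + 1) - 1) ∈
        {g : List Str | ∀ (x : Lev k) (h : idx x.val < g.length),
          g.get ⟨idx x.val, h⟩ = (σ x).val}} := by
    ext π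
    simp only [Set.mem_setOf_eq]
    constructor
    · intro hE x h
      have h1 : idx x.val < 2 ^ (k + 1) - 1 := by
        have := idx_lt x.val
        rw [x.2] at this
        exact this
      rw [show (π.restrict (2 ^ (k+1) - 1)).get ⟨idx x.val, h⟩ = π.toFun (stdEnum (idx x.val))
        from restrict_get π _ _ h1]
      rw [stdEnum_idx]
      rw [← hE]
      rfl
    · intro hA
      ext x
      refine Subtype.ext ?_
      have h1 : idx x.val < 2 ^ (k + 1) - 1 := by
        have := idx_lt x.val
        rw [x.2] at this
        exact this
      have h2 : idx x.val < (π.restrict (2 ^ (k + 1) - 1)).length := by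
        rw [restrict_length]; exact h1
      have := hA x h2
      rw [show (π.restrict (2 ^ (k+1) - 1)).get ⟨idx x.val, h2⟩ = π.toFun (stdEnum (idx x.val))
        from restrict_get π _ _ h1, stdEnum_idx] at this
      exact this
  rw [key]
  exact measurableSet_restrict_mem _ _

lemma measurable_E_symm : Measurable (E.symm : G → LPPerm) := by
  apply measurable_generateFrom
  rintro S ⟨g, hg, rfl⟩
  have key : (E.symm : G → LPPerm) ⁻¹' cyl g =
      ⋂ i : Fin g.length, {f : G | (f (stdEnum i).length ⟨stdEnum i, rfl⟩).val = g.get i} := by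
    ext f
    simp only [Set.mem_preimage, Set.mem_iInter, Set.mem_setOf_eq]
    constructor
    · intro h i
      exact h i i.2
    · intro h i hi
      exact h ⟨i, hi⟩
  rw [key]
  exact MeasurableSet.iInter (fun i =>
    (measurable_pi_apply (stdEnum i).length)
      (show MeasurableSet {σ : Perm (Lev (stdEnum i).length) | (σ ⟨stdEnum i, rfl⟩).val = g.get i}
        from trivial))

/-- The measurable equivalence between Π and the product group. -/
noncomputable def EM : LPPerm ≃ᵐ G :=
  { toEquiv := E, measurable_toFun := measurable_E, measurable_invFun := measurable_E_symm }

open MeasureTheory TopologicalSpace Equiv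
open scoped ENNReal

/-- normalized Haar measure on the compact group `G` -/
noncomputable def muG : Measure G := Measure.haarMeasure (⊤ : PositiveCompacts G)

instance : IsProbabilityMeasure muG :=
  ⟨by rw [← PositiveCompacts.coe_top (α := G)]; exact Measure.haarMeasure_self⟩

instance : muG.IsMulLeftInvariant := Measure.isMulLeftInvariant_haarMeasure _

/-- the set of `f` agreeing with `τ` on all levels `≤ n` -/
def Sfull (n : ℕ) (τ : ∀ k : Fin (n+1), Perm (Lev k)) : Set G :=
  {f | ∀ k : Fin (n+1), f k = τ k}

lemma measurableSet_Sfull (n : ℕ) (τ : ∀ k : Fin (n+1), Perm (Lev k)) :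
    MeasurableSet (Sfull n τ) := by
  have : Sfull n τ = ⋂ k : Fin (n+1), (fun f : G => f (k : ℕ)) ⁻¹' {τ k} := by
    ext f; simp [Sfull]
  rw [this]
  exact MeasurableSet.iInter fun k => (measurable_pi_apply _) trivial

lemma muG_Sfull_eq (n : ℕ) (τ τ' : ∀ k : Fin (n+1), Perm (Lev k)) :
    muG (Sfull n τ) = muG (Sfull n τ') := by
  classical
  set c : G := fun k => if h : k < n + 1 then τ' ⟨k, h⟩ * (τ ⟨k, h⟩)⁻¹ else 1 with hc
  have hck : ∀ k : Fin (n+1), c (k : ℕ) = τ' k * (τ k)⁻¹ := by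
    intro k
    simp only [hc, dif_pos k.2, Fin.eta]
  have hset : Sfull n τ' = (fun f : G => c⁻¹ * f) ⁻¹' (Sfull n τ) := by
    ext f
    simp only [Sfull, Set.mem_preimage, Set.mem_setOf_eq, Pi.mul_apply, Pi.inv_apply]
    constructor
    · intro h k
      rw [h k, hck k]
      group
    · intro h k
      have h1 := h k
      have h2 : f (k : ℕ) = c (k : ℕ) * τ k := by
        rw [← h1]
        group
      rw [h2, hck k]
      group
  rw [hset, measure_preimage_mul]

lemma muG_Sfull (n : ℕ) (τ : ∀ k : Fin (n+1), Perm (Lev k)) :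
    muG (Sfull n τ) = (∏ k ∈ Finset.range (n+1), ((2 ^ k).factorial : ℝ≥0∞))⁻¹ := by
  classical
  set C : ℝ≥0∞ := ∏ k ∈ Finset.range (n+1), ((2 ^ k).factorial : ℝ≥0∞) with hC
  have hC0 : C ≠ 0 := by
    rw [hC]
    refine (Finset.prod_ne_zero_iff).mpr fun k _ => ?_
    exact_mod_cast (Nat.factorial_pos _).ne'
  have hCtop : C ≠ ⊤ := by
    rw [hC]
    exact (ENNReal.prod_lt_top (fun k _ => ENNReal.natCast_lt_top _)).ne
  have hpart : (Set.univ : Set G) =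
      ⋃ σ ∈ (Finset.univ : Finset (∀ k : Fin (n+1), Perm (Lev k))), Sfull n σ := by
    ext f
    simp only [Set.mem_univ, true_iff, Set.mem_iUnion]
    exact ⟨fun k => f k, Finset.mem_univ _, fun k => rfl⟩
  have hdisj : (↑(Finset.univ : Finset (∀ k : Fin (n+1), Perm (Lev k))) : Set _).PairwiseDisjoint
      (Sfull n) := by
    intro σ _ σ' _ hne
    refine Set.disjoint_left.mpr fun f hf hf' => hne (funext fun k => ?_)
    rw [← hf k, ← hf' k]
  have hsum : (1 : ℝ≥0∞) = ∑ σ : (∀ k : Fin (n+1), Perm (Lev k)), muG (Sfull n σ) := by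
    rw [← measure_univ (μ := muG), hpart,
      measure_biUnion_finset hdisj (fun σ _ => measurableSet_Sfull n σ)]
  have hconst : ∑ σ : (∀ k : Fin (n+1), Perm (Lev k)), muG (Sfull n σ) =
      (Fintype.card (∀ k : Fin (n+1), Perm (Lev k)) : ℝ≥0∞) * muG (Sfull n τ) := by
    rw [Finset.sum_congr rfl (fun σ _ => muG_Sfull_eq n σ τ), Finset.sum_const,
      nsmul_eq_mul, Fintype.card]
  have hcard : (Fintype.card (∀ k : Fin (n+1), Perm (Lev k)) : ℝ≥0∞) = C := by
    rw [Fintype.card_pi]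
    rw [show (∏ k : Fin (n+1), Fintype.card (Perm (Lev k))) =
        ∏ k : Fin (n+1), (2 ^ (k : ℕ)).factorial from
      Finset.prod_congr rfl fun k _ => by rw [Fintype.card_perm, card_lev]]
    rw [hC]
    push_cast
    exact Fin.prod_univ_eq_prod_range (fun k => ((2 ^ k).factorial : ℝ≥0∞)) (n+1)
  have h1 : C * muG (Sfull n τ) = 1 := by rw [← hcard, ← hconst, ← hsum]
  calc muG (Sfull n τ) = C⁻¹ * (C * muG (Sfull n τ)) := by
        rw [← mul_assoc, ENNReal.inv_mul_cancel hC0 hCtop, one_mul]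
    _ = C⁻¹ := by rw [h1, mul_one]


lemma card_perm_extend {α : Type*} [Fintype α] [DecidableEq α] (s : Finset α) (φ : α → α)
    (hφ : ∀ x ∈ s, ∀ y ∈ s, φ x = φ y → x = y) :
    Fintype.card {σ : Perm α // ∀ x ∈ s, σ x = φ x} = (Fintype.card α - s.card).factorial := by
  classical
  have hbij : Function.Bijective (fun x : {x // x ∈ s} =>
      (⟨φ x.val, Finset.mem_image_of_mem φ x.2⟩ : {y // y ∈ s.image φ})) := by
    constructor
    · rintro ⟨x, hx⟩ ⟨y, hy⟩ h
      exact Subtype.ext (hφ x hx y hy (congrArg Subtype.val h))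
    · rintro ⟨y, hy⟩
      obtain ⟨x, hx, rfl⟩ := Finset.mem_image.mp hy
      exact ⟨⟨x, hx⟩, rfl⟩
  set e := Equiv.ofBijective _ hbij with he
  set σ0 : Perm α := Equiv.extendSubtype e with hσ0
  have hσ0mem : ∀ x ∈ s, σ0 x = φ x := fun x hx => by
    rw [hσ0, Equiv.extendSubtype_apply_of_mem e x hx]
    rfl
  have e1 : {σ : Perm α // ∀ x ∈ s, σ x = φ x} ≃ {σ : Perm α // ∀ x ∈ s, σ x = x} :=
    { toFun := fun σ => ⟨σ0⁻¹ * σ.val, fun x hx => by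
        rw [Equiv.Perm.mul_apply, σ.2 x hx, ← hσ0mem x hx]
        exact σ0.symm_apply_apply x⟩
      invFun := fun σ => ⟨σ0 * σ.val, fun x hx => by
        rw [Equiv.Perm.mul_apply, σ.2 x hx, hσ0mem x hx]⟩
      left_inv := fun σ => Subtype.ext (by simp [← mul_assoc])
      right_inv := fun σ => Subtype.ext (by simp [← mul_assoc]) }
  have e2 : {σ : Perm α // ∀ x ∈ s, σ x = x} ≃ Perm {x : α // x ∉ s} := by
    refine (Equiv.subtypeEquivRight ?_).trans
      (Equiv.Perm.subtypeEquivSubtypePerm (fun x => x ∉ s)).symm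
    intro σ
    constructor
    · intro h x hx
      exact h x (not_not.mp hx)
    · intro h x hx
      exact h x (not_not_intro hx)
  rw [Fintype.card_congr (e1.trans e2), Fintype.card_perm]
  congr 1
  rw [show Fintype.card {x : α // x ∉ s} = Fintype.card α - Fintype.card {x : α // x ∈ s} from
    Fintype.card_subtype_compl _, Fintype.card_coe]


open scoped Classical

lemma lvl_lt {i N : ℕ} (h : i < N) : (stdEnum i).length < Nat.log 2 (N + 1) + 1 := by
  rw [length_stdEnum]
  have := Nat.log_mono_right (b := 2) (show i + 1 ≤ N + 1 by omega)
  omega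

/-- the level-`k` constraint imposed by `g` -/
def Q (g : List Str) (k : ℕ) (σ : Perm (Lev k)) : Prop :=
  ∀ i (h : i < g.length) (hk : (stdEnum i).length = k),
    (σ ⟨stdEnum i, hk⟩).val = g.get ⟨i, h⟩

/-- compatibility of a finite tuple of level permutations with `g` -/
def Compat (g : List Str) (τ : ∀ k : Fin (Nat.log 2 (g.length + 1) + 1), Perm (Lev k)) : Prop :=
  ∀ k : Fin (Nat.log 2 (g.length + 1) + 1), Q g k (τ k)

noncomputable def compatSet (g : List Str) :
    Finset (∀ k : Fin (Nat.log 2 (g.length + 1) + 1), Perm (Lev k)) :=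
  Finset.univ.filter (fun τ => Compat g τ)

lemma SG_eq (g : List Str) :
    (E.symm : G → LPPerm) ⁻¹' cyl g =
      ⋃ τ ∈ compatSet g, Sfull (Nat.log 2 (g.length + 1)) τ := by
  ext f
  simp only [Set.mem_preimage, Set.mem_iUnion, compatSet, Finset.mem_filter,
    Finset.mem_univ, true_and]
  constructor
  · intro hf
    refine ⟨fun k => f k, ?_, fun k => rfl⟩
    intro k i hi hk
    have h1 : (f (stdEnum i).length ⟨stdEnum i, rfl⟩).val = g.get ⟨i, hi⟩ := hf i hi
    rw [← h1]
    exact (key_cast f k (stdEnum i) hk).symm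
  · rintro ⟨τ, hτ, hfτ⟩
    intro i hi
    show (f (stdEnum i).length ⟨stdEnum i, rfl⟩).val = _
    have hk : (stdEnum i).length < Nat.log 2 (g.length + 1) + 1 := lvl_lt hi
    have h1 := hfτ ⟨(stdEnum i).length, hk⟩
    have h2 := hτ ⟨(stdEnum i).length, hk⟩ i hi rfl
    rw [← h2]
    exact congrArg (fun σ => (σ ⟨stdEnum i, rfl⟩).val) h1

lemma Sfull_disjoint (n : ℕ) {τ τ' : ∀ k : Fin (n+1), Perm (Lev k)} (h : τ ≠ τ') :
    Disjoint (Sfull n τ) (Sfull n τ') :=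
  Set.disjoint_left.mpr fun f hf hf' => h (funext fun k => by rw [← hf k, ← hf' k])

lemma card_Q_lt (g : List Str) (hg : IsPPP g) (k : ℕ) (hk : k < Nat.log 2 (g.length + 1)) :
    Fintype.card {σ : Perm (Lev k) // Q g k σ} = 1 := by
  set N := g.length with hN
  set n := Nat.log 2 (N + 1) with hn
  have hN1 : 2 ^ n ≤ N + 1 := Nat.pow_log_le_self 2 (Nat.succ_ne_zero N)
  have hidx : ∀ x : Lev k, idx x.val < N := by
    intro x
    have h1 := idx_lt x.val
    rw [x.2] at h1
    have h2 : 2 ^ (k + 1) ≤ 2 ^ n := Nat.pow_le_pow_right (by norm_num) hk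
    omega
  have idxinj : Function.Injective idx := Function.LeftInverse.injective stdEnum_idx
  set ψ : Lev k → Lev k := fun x =>
    ⟨g.get ⟨idx x.val, hidx x⟩, by rw [hg.2 (idx x.val) (hidx x), stdEnum_idx, x.2]⟩ with hψ
  have hinj : Function.Injective ψ := by
    intro x y h
    have h1 : g.get ⟨idx x.val, hidx x⟩ = g.get ⟨idx y.val, hidx y⟩ := congrArg Subtype.val h
    have h2 := (List.Nodup.get_inj_iff hg.1).mp h1
    exact Subtype.ext (idxinj (congrArg Fin.val h2))
  set σ0 : Perm (Lev k) := Equiv.ofBijective ψ (Finite.injective_iff_bijective.mp hinj) with hσ0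
  have hQ0 : Q g k σ0 := by
    intro i hi hk'
    show (ψ ⟨stdEnum i, hk'⟩).val = _
    simp only [hψ, idx_stdEnum]
  have huniq : ∀ σ : Perm (Lev k), Q g k σ → σ = σ0 := by
    intro σ hσ
    ext x
    have hk' : (stdEnum (idx x.val)).length = k := by rw [stdEnum_idx, x.2]
    have h1 := hσ (idx x.val) (hidx x) hk'
    have h2 : (⟨stdEnum (idx x.val), hk'⟩ : Lev k) = x := Subtype.ext (stdEnum_idx x.val)
    rw [h2] at h1
    show σ x = ψ x
    exact Subtype.ext h1
  exact Fintype.card_eq_one_iff.mpr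
    ⟨⟨σ0, hQ0⟩, fun b => Subtype.ext (huniq b.1 b.2)⟩

lemma card_Q_top (g : List Str) (hg : IsPPP g) :
    Fintype.card {σ : Perm (Lev (Nat.log 2 (g.length + 1))) // Q g (Nat.log 2 (g.length + 1)) σ}
      = (2 ^ Nat.log 2 (g.length + 1)
          - (g.length - (2 ^ Nat.log 2 (g.length + 1) - 1))).factorial := by
  set N := g.length with hN
  set n := Nat.log 2 (N + 1) with hn
  have hN1 : 2 ^ n ≤ N + 1 := Nat.pow_log_le_self 2 (Nat.succ_ne_zero N)
  have hN2 : N + 1 < 2 ^ (n + 1) := Nat.lt_pow_succ_log_self (by norm_num) _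
  have idxinj : Function.Injective idx := Function.LeftInverse.injective stdEnum_idx
  set s : Finset (Lev n) := Finset.univ.filter (fun x => idx x.val < N) with hs
  have hmem : ∀ x : Lev n, x ∈ s ↔ idx x.val < N := by
    intro x; simp [hs]
  have hgetlen : ∀ (i : ℕ) (h : i < N) (hk : (stdEnum i).length = n),
      (g.get ⟨i, h⟩).length = n := fun i h hk => by rw [hg.2 i h, hk]
  set φ : Lev n → Lev n := fun x =>
    if h : idx x.val < N then
      ⟨g.get ⟨idx x.val, h⟩, by rw [hg.2 (idx x.val) h, stdEnum_idx, x.2]⟩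
    else x with hφdef
  have hQiff : ∀ σ : Perm (Lev n), Q g n σ ↔ ∀ x ∈ s, σ x = φ x := by
    intro σ
    constructor
    · intro hσ x hx
      have h : idx x.val < N := (hmem x).mp hx
      have hk' : (stdEnum (idx x.val)).length = n := by rw [stdEnum_idx, x.2]
      have h1 := hσ (idx x.val) h hk'
      have h2 : (⟨stdEnum (idx x.val), hk'⟩ : Lev n) = x := Subtype.ext (stdEnum_idx x.val)
      rw [h2] at h1
      refine Subtype.ext ?_
      rw [h1, hφdef]
      simp [h]
    · intro hall i hi hk'
      set x : Lev n := ⟨stdEnum i, hk'⟩ with hx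
      have hix : idx x.val = i := idx_stdEnum i
      have hmemx : x ∈ s := (hmem x).mpr (by rw [hix]; exact hi)
      have h1 := congrArg Subtype.val (hall x hmemx)
      rw [h1, hφdef]
      have h : idx x.val < N := by rw [hix]; exact hi
      simp only [dif_pos h]
      simp [h]
      congr 1 <;> exact hix
    -- end
  have hφinj : ∀ x ∈ s, ∀ y ∈ s, φ x = φ y → x = y := by
    intro x hx y hy h
    have hxN := (hmem x).mp hx
    have hyN := (hmem y).mp hy
    have h1 : (φ x).val = (φ y).val := congrArg Subtype.val h
    rw [hφdef] at h1
    beta_reduce at h1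
    simp [hxN, hyN] at h1
    have h2 := (List.Nodup.get_inj_iff hg.1).mp h1
    exact Subtype.ext (idxinj (congrArg Fin.val h2))
  have hcards : s.card = N - (2 ^ n - 1) := by
    have himg : s.image (fun x => idx x.val) = Finset.Ico (2 ^ n - 1) N := by
      ext i
      simp only [Finset.mem_image, Finset.mem_Ico]
      constructor
      · rintro ⟨x, hx, rfl⟩
        have h1 := le_idx x.val
        rw [x.2] at h1
        exact ⟨h1, (hmem x).mp hx⟩
      · rintro ⟨hi1, hi2⟩
        have hlen : (stdEnum i).length = n := by
          rw [length_stdEnum]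
          refine Nat.log_eq_of_pow_le_of_lt_pow ?_ ?_
          · have : 0 < 2 ^ n := Nat.pow_pos (by norm_num)
            omega
          · omega
        refine ⟨⟨stdEnum i, hlen⟩, ?_, idx_stdEnum i⟩
        refine (hmem _).mpr ?_
        rw [idx_stdEnum]
        exact hi2
    have hinj2 : Function.Injective (fun x : Lev n => idx x.val) :=
      fun x y h => Subtype.ext (idxinj h)
    rw [← Finset.card_image_of_injective s hinj2, himg, Nat.card_Ico]
  have hcardsubtype :
      Fintype.card {σ : Perm (Lev n) // Q g n σ}
        = Fintype.card {σ : Perm (Lev n) // ∀ x ∈ s, σ x = φ x} :=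
    Fintype.card_congr (Equiv.subtypeEquivRight hQiff)
  rw [hcardsubtype, card_perm_extend s φ hφinj, card_lev, hcards]

lemma card_compatSet (g : List Str) (hg : IsPPP g) :
    (compatSet g).card
      = (2 ^ Nat.log 2 (g.length + 1)
          - (g.length - (2 ^ Nat.log 2 (g.length + 1) - 1))).factorial := by
  set n := Nat.log 2 (g.length + 1) with hn
  have h1 : (compatSet g).card = Fintype.card {τ // Compat g τ} :=
    (Fintype.card_subtype _).symm
  have h2 : Fintype.card {τ // Compat g τ}
      = Fintype.card (∀ k : Fin (n + 1), {σ : Perm (Lev k) // Q g k σ}) :=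
    Fintype.card_congr (Equiv.subtypePiEquivPi)
  rw [h1, h2, Fintype.card_pi]
  rw [Fin.prod_univ_castSucc]
  have h3 : ∀ k : Fin n, Fintype.card {σ : Perm (Lev (k.castSucc : ℕ)) // Q g (k.castSucc : ℕ) σ} = 1 :=
    fun k => card_Q_lt g hg k (by exact k.2)
  rw [Finset.prod_congr rfl (fun k _ => h3 k), Finset.prod_const_one, one_mul]
  exact card_Q_top g hg

lemma muPPP_eq (g : List Str) :
    ENNReal.ofReal (muPPP g)
      = ((2 ^ Nat.log 2 (g.length + 1)
            - (g.length - (2 ^ Nat.log 2 (g.length + 1) - 1))).factorial : ℝ≥0∞)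
          * (∏ k ∈ Finset.range (Nat.log 2 (g.length + 1) + 1),
              ((2 ^ k).factorial : ℝ≥0∞))⁻¹ := by
  set n := Nat.log 2 (g.length + 1) with hn
  set m := g.length - (2 ^ n - 1) with hm
  have hlog2 : Nat.log2 (g.length + 1) = n := Nat.log2_eq_log_two
  have hprodpos : (0 : ℝ) < ∏ k ∈ Finset.range (n + 1), ((2 ^ k).factorial : ℝ) :=
    Finset.prod_pos fun k _ => by exact_mod_cast Nat.factorial_pos _
  have hval : muPPP g = ((2 ^ n - m).factorial : ℝ)
      / (∏ k ∈ Finset.range (n + 1), ((2 ^ k).factorial : ℝ)) := by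
    rw [muPPP, hlog2, Finset.prod_range_succ, Finset.prod_div_distrib,
      Finset.prod_const_one, one_div_mul_eq_div, div_div]
  rw [hval, ENNReal.ofReal_div_of_pos hprodpos, div_eq_mul_inv]
  congr 1
  · exact ENNReal.ofReal_natCast _
  · congr 1
    rw [← Nat.cast_prod, ENNReal.ofReal_natCast, Nat.cast_prod]

lemma muG_cyl (g : List Str) (hg : IsPPP g) :
    muG ((E.symm : G → LPPerm) ⁻¹' cyl g) = ENNReal.ofReal (muPPP g) := by
  set n := Nat.log 2 (g.length + 1) with hn
  rw [SG_eq g]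
  rw [measure_biUnion_finset
    (fun τ _ τ' _ hne => Sfull_disjoint n hne)
    (fun τ _ => measurableSet_Sfull n τ)]
  rw [Finset.sum_congr rfl (fun τ _ => muG_Sfull n τ), Finset.sum_const, nsmul_eq_mul]
  rw [card_compatSet g hg, muPPP_eq g]

end PPPAux

/-- There is a unique probability measure on `(Π, F_Π)` assigning each cylinder
`cyl(g)` the value `(∏_{k<n} 1/(2^k)!) · (2^n − m)!/(2^n)!`. -/
theorem stmt1 :
    ∃! μ : Measure LPPerm,
      IsProbabilityMeasure μ ∧ ∀ g, IsPPP g → μ (cyl g) = ENNReal.ofReal (muPPP g) := by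
  classical
  set μ : Measure LPPerm := PPPAux.muG.map (PPPAux.EM.symm : PPPAux.G ≃ᵐ LPPerm) with hμ
  have hprob : IsProbabilityMeasure μ :=
    Measure.isProbabilityMeasure_map (PPPAux.EM.symm.measurable.aemeasurable)
  have hval : ∀ g, IsPPP g → μ (cyl g) = ENNReal.ofReal (muPPP g) := by
    intro g hg
    rw [hμ, MeasurableEquiv.map_apply]
    exact PPPAux.muG_cyl g hg
  refine ⟨μ, ⟨hprob, hval⟩, ?_⟩
  rintro ν ⟨hν1, hν2⟩
  have hpi : IsPiSystem {S : Set LPPerm | ∃ g, IsPPP g ∧ S = cyl g} := by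
    rintro S ⟨g, hg, rfl⟩ T ⟨g', hg', rfl⟩ hne
    obtain ⟨π, hπ1, hπ2⟩ := hne
    rcases le_total g.length g'.length with hle | hle
    · refine ⟨g', hg', ?_⟩
      rw [Set.inter_eq_right.mpr ?_]
      intro π' hπ'
      intro i hi
      rw [hπ' i (lt_of_lt_of_le hi hle), ← hπ2 i (lt_of_lt_of_le hi hle), hπ1 i hi]
    · refine ⟨g, hg, ?_⟩
      rw [Set.inter_eq_left.mpr ?_]
      intro π' hπ'
      intro i hi
      rw [hπ' i (lt_of_lt_of_le hi hle), ← hπ1 i (lt_of_lt_of_le hi hle), hπ2 i hi]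
  refine MeasureTheory.ext_of_generate_finite {S : Set LPPerm | ∃ g, IsPPP g ∧ S = cyl g}
    rfl hpi ?_ ?_
  · rintro S ⟨g, hg, rfl⟩
    rw [hν2 g hg, hval g hg]
  · rw [measure_univ, measure_univ]
end

section
/- If W ⊆ PPΠ is a prefix-free set (no element of W is a proper prefix of another element of W) and d is any permutation martingale, then Σ_{g ∈ W} μ(g)·d(g) ≤ d([]). -/
open Filter MeasureTheory

lemma size_eq (n : ℕ) (h : n ≠ 0) : n.size = n.log2 + 1 := by
  refine le_antisymm ?_ ?_
  · rw [Nat.size_le]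
    exact Nat.lt_log2_self
  · rw [Nat.succ_le_iff, Nat.lt_size]
    exact Nat.log2_self_le h

lemma stdEnum_length (i : ℕ) : (stdEnum i).length = Nat.log2 (i + 1) := by
  simp [stdEnum, Nat.size_eq_bits_len, size_eq (i+1) (by omega)]

lemma mem_strsOfLen {x : Str} {n : ℕ} : x ∈ strsOfLen n ↔ x.length = n := by
  constructor
  · rintro hx
    simp only [strsOfLen, Finset.mem_image] at hx
    obtain ⟨f, _, rfl⟩ := hx
    simp
  · intro hx
    simp only [strsOfLen, Finset.mem_image]
    exact ⟨fun j => x.get (hx ▸ j), Finset.mem_univ _, by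
      subst hx; exact (List.ofFn_get x)⟩

lemma card_strsOfLen (n : ℕ) : (strsOfLen n).card = 2 ^ n := by
  rw [strsOfLen, Finset.card_image_of_injective _ List.ofFn_injective]
  simp [Finset.card_univ]
lemma log2_eq_iff {i n : ℕ} : Nat.log2 (i+1) = n ↔ 2 ^ n ≤ i + 1 ∧ i + 1 < 2 ^ (n+1) := by
  constructor
  · rintro rfl
    exact ⟨Nat.log2_self_le (by omega), Nat.lt_log2_self⟩
  · rintro ⟨h1, h2⟩
    have a := (Nat.le_log2 (n := i+1) (by omega)).2 h1
    have b := (Nat.log2_lt (n := i+1) (by omega)).2 h2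
    omega

lemma card_freeSet {g : List Str} (hg : IsPPP g) :
    (freeSet g).card = 2 ^ Nat.log2 (g.length + 1) - (g.length + 1 - 2 ^ Nat.log2 (g.length + 1)) := by
  classical
  set L := g.length with hL
  set n := Nat.log2 (L + 1) with hn
  have hn1 : 2 ^ n ≤ L + 1 := Nat.log2_self_le (by omega)
  have hn2 : L + 1 < 2 ^ (n + 1) := Nat.lt_log2_self
  have key : (strsOfLen n).filter (fun x => x ∈ g) =
      (Finset.Ico (2 ^ n - 1) L).image (fun i => g.getD i []) := by
    ext x
    simp only [Finset.mem_filter, Finset.mem_image, Finset.mem_Ico, mem_strsOfLen]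
    constructor
    · rintro ⟨hlen, hmem⟩
      obtain ⟨⟨i, hi⟩, rfl⟩ := List.mem_iff_get.1 hmem
      refine ⟨i, ⟨?_, hi⟩, ?_⟩
      · have := hg.2 i hi
        rw [stdEnum_length] at this
        have : Nat.log2 (i+1) = n := by rw [← this, hlen]
        rw [log2_eq_iff] at this
        omega
      · exact (List.getD_eq_getElem _ _ hi)
    · rintro ⟨i, ⟨hi1, hi2⟩, rfl⟩
      rw [List.getD_eq_getElem _ _ hi2]
      refine ⟨?_, List.getElem_mem _⟩
      have := hg.2 i hi2
      rw [stdEnum_length] at this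
      rw [List.get_eq_getElem] at this
      rw [this, log2_eq_iff]
      constructor
      · omega
      · have : i + 1 ≤ L := hi2
        calc i + 1 ≤ L := this
          _ < 2^(n+1) := by omega
  have hcardIm : ((Finset.Ico (2 ^ n - 1) L).image (fun i => g.getD i [])).card
       = L - (2^n - 1) := by
    rw [Finset.card_image_of_injOn, Nat.card_Ico]
    intro a ha b hb hab
    simp only [Finset.coe_Ico, Set.mem_Ico] at ha hb
    simp only [List.getD_eq_getElem _ _ ha.2, List.getD_eq_getElem _ _ hb.2] at hab
    exact (List.Nodup.getElem_inj_iff hg.1).1 hab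
  have : (freeSet g).card = (strsOfLen n).card - ((strsOfLen n).filter (fun x => x ∈ g)).card := by
    rw [freeSet, stdEnum_length]
    rw [← Finset.card_sdiff_of_subset (Finset.filter_subset _ _)]
    congr 1
    ext x
    simp only [Finset.mem_sdiff, Finset.mem_filter]
    tauto
  rw [this, key, hcardIm, card_strsOfLen]
  omega
noncomputable def muL (L : ℕ) : ℝ :=
  (∏ k ∈ Finset.range (Nat.log2 (L + 1)), (1 : ℝ) / (Nat.factorial (2 ^ k))) *
      (Nat.factorial (2 ^ Nat.log2 (L + 1) - (L - (2 ^ Nat.log2 (L + 1) - 1)))) /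
      (Nat.factorial (2 ^ Nat.log2 (L + 1)))

lemma muPPP_eq (g : List Str) : muPPP g = muL g.length := rfl

lemma muL_nonneg (L : ℕ) : 0 ≤ muL L := by
  apply div_nonneg
  · apply mul_nonneg
    · exact Finset.prod_nonneg fun k _ => by positivity
    · positivity
  · positivity

lemma muL_succ (L : ℕ) :
    muL (L + 1) * ((2 ^ Nat.log2 (L + 1) - (L + 1 - 2 ^ Nat.log2 (L + 1)) : ℕ) : ℝ) = muL L := by
  set n := Nat.log2 (L + 1) with hn
  have hn1 : 2 ^ n ≤ L + 1 := Nat.log2_self_le (by omega)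
  have hn2 : L + 1 < 2 ^ (n + 1) := Nat.lt_log2_self
  have hp : (2:ℕ) ^ (n + 1) = 2 * 2 ^ n := by ring
  rcases eq_or_lt_of_le (show L + 2 ≤ 2 ^ (n + 1) by omega) with hcase | hcase
  · -- boundary: L + 2 = 2^(n+1)
    have hlog : Nat.log2 (L + 1 + 1) = n + 1 := by
      rw [log2_eq_iff]
      have hq : (2:ℕ) ^ (n + 2) = 2 * 2 ^ (n+1) := by ring
      omega
    have hc : 2 ^ n - (L + 1 - 2 ^ n) = 1 := by omega
    have e1 : 2 ^ (n + 1) - (L + 1 - (2 ^ (n + 1) - 1)) = 2 ^ (n + 1) := by omega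
    have e2 : 2 ^ n - (L - (2 ^ n - 1)) = 1 := by omega
    simp only [muL, hlog, ← hn, e1, e2, hc, Finset.prod_range_succ]
    have f1 : (0:ℝ) < Nat.factorial (2 ^ n) := by exact_mod_cast Nat.factorial_pos _
    have f2 : (0:ℝ) < Nat.factorial (2 ^ (n + 1)) := by exact_mod_cast Nat.factorial_pos _
    field_simp
    ring
  · -- interior: L + 2 < 2^(n+1)
    have hlog : Nat.log2 (L + 1 + 1) = n := by
      rw [log2_eq_iff]
      omega
    set c := 2 ^ n - (L + 1 - 2 ^ n) with hcdef
    have hc2 : 2 ≤ c := by omega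
    obtain ⟨c', hc'⟩ : ∃ c', c = c' + 1 := ⟨c - 1, by omega⟩
    have e1 : 2 ^ n - (L + 1 - (2 ^ n - 1)) = c' := by omega
    have e2 : 2 ^ n - (L - (2 ^ n - 1)) = c := by omega
    simp only [muL, hlog, ← hn, e1, e2, hc']
    rw [Nat.factorial_succ]
    push_cast
    ring
lemma freeSet_mem {g : List Str} {x : Str} :
    x ∈ freeSet g ↔ x.length = (stdEnum g.length).length ∧ x ∉ g := by
  simp [freeSet, mem_strsOfLen]

lemma isPPP_nil : IsPPP [] := ⟨List.nodup_nil, fun i h => by simp at h⟩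

lemma isPPP_append {g : List Str} {x : Str} (hg : IsPPP g) (hx : x ∈ freeSet g) :
    IsPPP (g ++ [x]) := by
  obtain ⟨hlen, hnot⟩ := freeSet_mem.1 hx
  constructor
  · rw [List.nodup_append]
    exact ⟨hg.1, List.nodup_singleton x, fun a ha b hb hab => hnot (by simp at hb; rw [← hb, ← hab]; exact ha)⟩
  · intro i hi
    rw [List.length_append, List.length_singleton] at hi
    rcases lt_or_eq_of_le (Nat.lt_succ_iff.1 hi) with h | h
    · rw [List.get_eq_getElem, List.getElem_append_left h]
      exact hg.2 i h
    · subst h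
      simp only [List.get_eq_getElem, List.getElem_concat_length]
      exact hlen

lemma isPPP_append_rev {g : List Str} {x : Str} (h : IsPPP (g ++ [x])) :
    IsPPP g ∧ x ∈ freeSet g := by
  obtain ⟨hnd, hlen⟩ := h
  rw [List.nodup_append] at hnd
  refine ⟨⟨hnd.1, fun i hi => ?_⟩, ?_⟩
  · have := hlen i (by rw [List.length_append, List.length_singleton]; omega)
    rw [List.get_eq_getElem, List.getElem_append_left hi] at this
    rw [List.get_eq_getElem]
    exact this
  · rw [freeSet_mem]
    have := hlen g.length (by simp)
    simp only [List.get_eq_getElem, List.getElem_concat_length] at this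
    refine ⟨this, fun hmem => ?_⟩
    exact hnd.2.2 x hmem x (List.mem_singleton_self x) rfl

def extTo (g : List Str) : ℕ → Finset (List Str)
  | 0 => {g}
  | k + 1 => (extTo g k).biUnion (fun h => (freeSet h).image (fun x => h ++ [x]))

lemma extTo_spec {g : List Str} (hg : IsPPP g) :
    ∀ k, ∀ h ∈ extTo g k, IsPPP h ∧ h.length = g.length + k ∧ g <+: h := by
  intro k
  induction k with
  | zero =>
    intro h hh
    simp only [extTo, Finset.mem_singleton] at hh
    subst hh
    exact ⟨hg, by simp, List.prefix_refl _⟩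
  | succ k ih =>
    intro h hh
    simp only [extTo, Finset.mem_biUnion, Finset.mem_image] at hh
    obtain ⟨h', hh', x, hx, rfl⟩ := hh
    obtain ⟨h1, h2, h3⟩ := ih h' hh'
    refine ⟨isPPP_append h1 hx, ?_, h3.trans (List.prefix_append h' [x])⟩
    rw [List.length_append, List.length_singleton, h2]
    omega

lemma extTo_mono {g g' : List Str} {a : ℕ} (h : g' ∈ extTo g a) :
    ∀ b, extTo g' b ⊆ extTo g (a + b) := by
  intro b
  induction b with
  | zero => intro h' hh'; simp only [extTo, Finset.mem_singleton] at hh'; subst hh'; exact h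
  | succ b ih =>
    intro h' hh'
    simp only [extTo, Finset.mem_biUnion] at hh' ⊢
    obtain ⟨h'', hh'', hm⟩ := hh'
    exact ⟨h'', ih hh'', hm⟩

lemma mem_extTo_self {g : List Str} (hg : IsPPP g) : g ∈ extTo [] g.length := by
  induction g using List.reverseRecOn with
  | nil => simp [extTo]
  | append_singleton g x ih =>
    obtain ⟨h1, h2⟩ := isPPP_append_rev hg
    rw [List.length_append, List.length_singleton]
    simp only [extTo, Finset.mem_biUnion, Finset.mem_image]
    exact ⟨g, ih h1, x, h2, rfl⟩

lemma freeSet_card_pos {g : List Str} (hg : IsPPP g) : 0 < (freeSet g).card := by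
  rw [card_freeSet hg]
  have h1 : 2 ^ Nat.log2 (g.length + 1) ≤ g.length + 1 := Nat.log2_self_le (by omega)
  have h2 : g.length + 1 < 2 ^ (Nat.log2 (g.length + 1) + 1) := Nat.lt_log2_self
  have hp : (2:ℕ) ^ (Nat.log2 (g.length + 1) + 1) = 2 * 2 ^ Nat.log2 (g.length + 1) := by
    rw [pow_succ]; omega
  omega

set_option maxHeartbeats 1000000 in
lemma onestep {g : List Str} (hg : IsPPP g) (d : List Str → ℝ) (hd : IsPermMartingale d) :
    ∑ x ∈ freeSet g, muL (g.length + 1) * d (g ++ [x]) = muL g.length * d g := by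
  have hc := card_freeSet hg
  have hcpos : 0 < (freeSet g).card := freeSet_card_pos hg
  have hsum : ∑ x ∈ freeSet g, d (g ++ [x]) = ((freeSet g).card : ℝ) * d g := by
    rw [hd.2 g hg]
    field_simp
  rw [← Finset.mul_sum, hsum, ← mul_assoc]
  congr 1
  rw [← muL_succ g.length, hc]

set_option maxHeartbeats 1000000 in
lemma extTo_sum {g : List Str} (hg : IsPPP g) (d : List Str → ℝ) (hd : IsPermMartingale d) :
    ∀ k, ∑ h ∈ extTo g k, muL h.length * d h = muL g.length * d g := by
  intro k
  induction k with
  | zero => simp [extTo]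
  | succ k ih =>
    rw [show extTo g (k+1) = (extTo g k).biUnion (fun h => (freeSet h).image (fun x => h ++ [x])) from rfl]
    rw [Finset.sum_biUnion]
    · rw [← ih]
      refine Finset.sum_congr rfl fun h hh => ?_
      obtain ⟨hP, hlen, _⟩ := extTo_spec hg k h hh
      rw [Finset.sum_image (fun x _ y _ hxy => by
        have := List.append_cancel_left hxy
        simpa using this)]
      have : ∀ x ∈ freeSet h, muL (h ++ [x]).length * d (h ++ [x]) = muL (h.length + 1) * d (h ++ [x]) := by
        intro x _
        rw [List.length_append, List.length_singleton]
      rw [Finset.sum_congr rfl this, onestep hP d hd]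
    · intro h1 hh1 h2 hh2 hne
      rw [Finset.mem_coe] at hh1 hh2
      rw [Function.onFun, Finset.disjoint_left]
      intro a ha1 ha2
      simp only [Finset.mem_image] at ha1 ha2
      obtain ⟨x, _, rfl⟩ := ha1
      obtain ⟨y, _, hy⟩ := ha2
      have hl1 := (extTo_spec hg k h1 hh1).2.1
      have hl2 := (extTo_spec hg k h2 hh2).2.1
      exact hne ((List.append_inj hy (by omega)).1.symm)
lemma muL_zero : muL 0 = 1 := by
  have h : Nat.log2 1 = 0 := by
    have := (Nat.log2_lt (n := 1) (by omega)).2 (by norm_num : (1:ℕ) < 2 ^ 1)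
    omega
  simp [muL, h, Nat.factorial]

lemma finsum_le (F : Finset (List Str)) (hF : ∀ g ∈ F, IsPPP g)
    (hpf : ∀ g ∈ F, ∀ h ∈ F, g <+: h → g = h)
    (d : List Str → ℝ) (hd : IsPermMartingale d) :
    ∑ g ∈ F, muL g.length * d g ≤ d [] := by
  classical
  set N := F.sup (fun g => g.length) with hN
  have hNle : ∀ g ∈ F, g.length ≤ N := fun g hg => Finset.le_sup hg
  have hdisj : (↑F : Set (List Str)).PairwiseDisjoint (fun g => extTo g (N - g.length)) := by
    intro g1 hg1 g2 hg2 hne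
    rw [Finset.mem_coe] at hg1 hg2
    rw [Function.onFun, Finset.disjoint_left]
    intro a ha1 ha2
    have p1 := (extTo_spec (hF g1 hg1) _ a ha1).2.2
    have p2 := (extTo_spec (hF g2 hg2) _ a ha2).2.2
    rcases List.prefix_or_prefix_of_prefix p1 p2 with h | h
    · exact hne (hpf g1 hg1 g2 hg2 h)
    · exact hne ((hpf g2 hg2 g1 hg1 h).symm)
  have key : ∑ g ∈ F, muL g.length * d g
      = ∑ h ∈ F.biUnion (fun g => extTo g (N - g.length)), muL h.length * d h := by
    rw [Finset.sum_biUnion hdisj]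
    exact Finset.sum_congr rfl fun g hg => (extTo_sum (hF g hg) d hd _).symm
  have hsub : F.biUnion (fun g => extTo g (N - g.length)) ⊆ extTo [] N := by
    intro h hh
    rw [Finset.mem_biUnion] at hh
    obtain ⟨g, hg, hhg⟩ := hh
    have := extTo_mono (mem_extTo_self (hF g hg)) (N - g.length) hhg
    rwa [Nat.add_sub_cancel' (hNle g hg)] at this
  have hnn : ∀ h ∈ extTo [] N, h ∉ F.biUnion (fun g => extTo g (N - g.length)) →
      0 ≤ muL h.length * d h := fun h _ _ => mul_nonneg (muL_nonneg _) (hd.1 h)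
  calc ∑ g ∈ F, muL g.length * d g
      = ∑ h ∈ F.biUnion (fun g => extTo g (N - g.length)), muL h.length * d h := key
    _ ≤ ∑ h ∈ extTo [] N, muL h.length * d h :=
        Finset.sum_le_sum_of_subset_of_nonneg hsub hnn
    _ = muL 0 * d [] := by simpa using extTo_sum isPPP_nil d hd N
    _ = d [] := by rw [muL_zero, one_mul]

/-- if `W ⊆ PPΠ` is prefix-free and `d` is any permutation martingale,
then `Σ_{g ∈ W} μ(g)·d(g) ≤ d([])`. -/
theorem stmt6 (W : Set (List Str)) (hWmem : ∀ g ∈ W, IsPPP g)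
    (hpf : ∀ g ∈ W, ∀ h ∈ W, g <+: h → g = h)
    (d : List Str → ℝ) (hd : IsPermMartingale d) :
    ∑' g : W, ENNReal.ofReal (muPPP g * d g) ≤ ENNReal.ofReal (d ([] : List Str)) := by
  classical
  rw [ENNReal.tsum_eq_iSup_sum]
  refine iSup_le fun s => ?_
  have h1 : ∑ a ∈ s, ENNReal.ofReal (muPPP ↑a * d ↑a)
      = ∑ g ∈ s.image Subtype.val, ENNReal.ofReal (muPPP g * d g) := by
    rw [Finset.sum_image (fun a _ b _ h => Subtype.ext h)]
  rw [h1, ← ENNReal.ofReal_sum_of_nonneg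
    (fun g _ => mul_nonneg (by rw [muPPP_eq]; exact muL_nonneg _) (hd.1 g))]
  apply ENNReal.ofReal_le_ofReal
  have hmemW : ∀ g ∈ s.image Subtype.val, g ∈ W := by
    intro g hg; rw [Finset.mem_image] at hg; obtain ⟨a, _, rfl⟩ := hg; exact a.2
  have hle := finsum_le (s.image Subtype.val) (fun g hg => hWmem g (hmemW g hg))
    (fun g hg h hh => hpf g (hmemW g hg) h (hmemW h hh)) d hd
  calc ∑ g ∈ s.image Subtype.val, muPPP g * d g
      = ∑ g ∈ s.image Subtype.val, muL g.length * d g :=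
        Finset.sum_congr rfl fun g _ => by rw [muPPP_eq]
    _ ≤ d [] := hle
end
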